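/- Complementary dGL equivalence for Demon: For every hybrid game α and every set of states X ⊆ S, the semi-competitive winning region with complementary goals coincides with the zero-sum dGL winning region: δ_α(Xᶜ, X) = δ_α(X), i.e., δ_α(Xᶜ, X) = (ς_α(Xᶜ))ᶜ. -/
import Mathlib


open Set

/-- Hybrid games over a variable set `V`. Terms/ODE right-hand sides are
interpreted as functions from states `V → ℝ` to `ℝ`; tests and evolution
domain constraints are sets of states. -/
inductive Game (V : Type*) where
  | assign (x : V) (e : (V → ℝ) → ℝ)
  | ode (x : V) (f : (V → ℝ) → ℝ) (Q : Set (V → ℝ))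
  | test (Q : Set (V → ℝ))
  | choice (a b : Game V)
  | seq (a b : Game V)
  | dual (a : Game V)
  | star (a : Game V)

variable {V : Type*} [DecidableEq V]

/-- `φ : ℝ → (V → ℝ)` (restricted to `[0,r]`) is a solution of `x' = f(x) & Q`
of duration `r ≥ 0`: `t ↦ φ t x` is differentiable with derivative `f (φ s)`
at each `s ∈ [0,r]`, `φ s ∈ Q` on `[0,r]`, and all other variables stay
constant along `φ`. -/
def IsSolution (x : V) (f : (V → ℝ) → ℝ) (Q : Set (V → ℝ)) (r : ℝ)
    (φ : ℝ → (V → ℝ)) : Prop :=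
  0 ≤ r ∧
  (∀ s ∈ Set.Icc 0 r, HasDerivAt (fun t => φ t x) (f (φ s)) s) ∧
  (∀ s ∈ Set.Icc 0 r, φ s ∈ Q) ∧
  (∀ s ∈ Set.Icc 0 r, ∀ y, y ≠ x → φ s y = φ 0 y)

mutual
/-- Angel's semi-competitive winning region ς_α(X,Y). -/
def angel : Game V → Set (V → ℝ) → Set (V → ℝ) → Set (V → ℝ)
  | .assign x e, X, _ => {ω | Function.update ω x (e ω) ∈ X}
  | .ode x f Q, X, _ =>
      {ω | ∃ r φ, IsSolution x f Q r φ ∧ φ 0 = ω ∧ φ r ∈ X}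
  | .test Q, X, _ => Q ∩ X
  | .choice a b, X, Y => angel a X Y ∪ angel b X Y
  | .seq a b, X, Y => angel a (angel b X Y) (demon b X Y)
  | .dual a, X, Y => demon a Y X
  | .star a, X, Y =>
      ⋂₀ {Z | X ∪ angel a Z Zᶜ ⊆ Z} ∪
      ⋂₀ {Z | (X ∩ Y) ∪ (angel a Z Z ∩ demon a Z Z) ⊆ Z}

/-- Demon's semi-competitive winning region δ_α(X,Y). -/
def demon : Game V → Set (V → ℝ) → Set (V → ℝ) → Set (V → ℝ)
  | .assign x e, _, Y => {ω | Function.update ω x (e ω) ∈ Y}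
  | .ode x f Q, X, Y =>
      {ω | ∀ r φ, IsSolution x f Q r φ → φ 0 = ω → ∀ s ∈ Set.Icc 0 r, φ s ∈ Y} ∪
      {ω | ∃ r φ, IsSolution x f Q r φ ∧ φ 0 = ω ∧ ∃ s ∈ Set.Icc 0 r, φ s ∈ X ∩ Y}
  | .test Q, _, Y => Qᶜ ∪ Y
  | .choice a b, X, Y =>
      (demon a X Y ∩ demon b X Y) ∪ (demon a X Y ∩ angel a X Y) ∪
      (demon b X Y ∩ angel b X Y)
  | .seq a b, X, Y => demon a (angel b X Y) (demon b X Y)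
  | .dual a, X, Y => angel a Y X
  | .star a, X, Y =>
      ⋃₀ {Z | Z ⊆ Y ∩ demon a Zᶜ Z} ∪
      ⋂₀ {Z | (X ∩ Y) ∪ (angel a Z Z ∩ demon a Z Z) ⊆ Z}
end

/-- Angel's one-argument zero-sum dGL winning region ς_α(X). -/
def dglAngel : Game V → Set (V → ℝ) → Set (V → ℝ)
  | .assign x e, X => {ω | Function.update ω x (e ω) ∈ X}
  | .ode x f Q, X => {ω | ∃ r φ, IsSolution x f Q r φ ∧ φ 0 = ω ∧ φ r ∈ X}
  | .test Q, X => Q ∩ X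
  | .choice a b, X => dglAngel a X ∪ dglAngel b X
  | .seq a b, X => dglAngel a (dglAngel b X)
  | .dual a, X => (dglAngel a Xᶜ)ᶜ
  | .star a, X => ⋂₀ {Z | X ∪ dglAngel a Z ⊆ Z}

/-- Demon's one-argument zero-sum dGL winning region δ_α(X) = (ς_α(Xᶜ))ᶜ. -/
def dglDemon (g : Game V) (X : Set (V → ℝ)) : Set (V → ℝ) :=
  (dglAngel g Xᶜ)ᶜ

/-- Systematization α^{-d}: removes all dual operators. -/
def Game.sys : Game V → Game V
  | .assign x e => .assign x e
  | .ode x f Q => .ode x f Q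
  | .test Q => .test Q
  | .choice a b => .choice a.sys b.sys
  | .seq a b => .seq a.sys b.sys
  | .dual a => a.sys
  | .star a => .star a.sys

omit [DecidableEq V] in
lemma IsSolution.trunc {x : V} {f : (V → ℝ) → ℝ} {Q : Set (V → ℝ)} {r s : ℝ}
    {φ : ℝ → (V → ℝ)} (h : IsSolution x f Q r φ) (hs : s ∈ Set.Icc (0:ℝ) r) :
    IsSolution x f Q s φ := by
  obtain ⟨hr, h1, h2, h3⟩ := h
  exact ⟨hs.1, fun t ht => h1 t ⟨ht.1, ht.2.trans hs.2⟩,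
    fun t ht => h2 t ⟨ht.1, ht.2.trans hs.2⟩,
    fun t ht => h3 t ⟨ht.1, ht.2.trans hs.2⟩⟩

theorem semi_zero_sum (α : Game V) :
    (∀ X Y : Set (V → ℝ), X ∩ Y = ∅ → angel α X Y ∩ demon α X Y = ∅) ∧
    (∀ X : Set (V → ℝ), angel α X Xᶜ = dglAngel α X) ∧
    (∀ X : Set (V → ℝ), demon α Xᶜ X = (dglAngel α Xᶜ)ᶜ) := by
  induction α with
  | assign x e =>
      refine ⟨?_, ?_, ?_⟩
      · intro X Y h
        rw [eq_empty_iff_forall_notMem]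
        rintro ω ⟨h1, h2⟩
        simp only [angel, demon, mem_setOf_eq] at h1 h2
        have : Function.update ω x (e ω) ∈ X ∩ Y := ⟨h1, h2⟩
        rw [h] at this; exact this
      · intro X; simp only [angel, dglAngel]
      · intro X; simp only [demon, dglAngel]; ext ω; simp
  | ode x f Q =>
      refine ⟨?_, ?_, ?_⟩
      · intro X Y h
        rw [eq_empty_iff_forall_notMem]
        rintro ω ⟨h1, h2⟩
        simp only [angel, demon, mem_setOf_eq, mem_union] at h1 h2
        obtain ⟨r, φ, hsol, h0, hr⟩ := h1
        rcases h2 with hall | ⟨r', φ', hsol', h0', s, hsm, hmem⟩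
        · have hY := hall r φ hsol h0 r ⟨hsol.1, le_rfl⟩
          have : φ r ∈ X ∩ Y := ⟨hr, hY⟩
          rw [h] at this; exact this
        · rw [h] at hmem; exact hmem
      · intro X; simp only [angel, dglAngel]
      · intro X
        simp only [demon, dglAngel]
        ext ω
        simp only [mem_union, mem_setOf_eq, mem_compl_iff, mem_inter_iff]
        constructor
        · rintro (hall | ⟨r, φ, hsol, h0, s, hsm, hmem, hmem'⟩)
          · rintro ⟨r, φ, hsol, h0, hr⟩
            exact hr (hall r φ hsol h0 r ⟨hsol.1, le_rfl⟩)
          · exact absurd hmem' hmem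
        · intro hne
          left
          intro r φ hsol h0 s hsm
          by_contra hx
          exact hne ⟨s, φ, hsol.trunc hsm, h0, hx⟩
  | test Q =>
      refine ⟨?_, ?_, ?_⟩
      · intro X Y h
        rw [eq_empty_iff_forall_notMem]
        rintro ω ⟨⟨hQ, hX⟩, h2⟩
        simp only [demon, mem_union, mem_compl_iff] at h2
        rcases h2 with hq | hY
        · exact hq hQ
        · have : ω ∈ X ∩ Y := ⟨hX, hY⟩
          rw [h] at this; exact this
      · intro X; simp only [angel, dglAngel]
      · intro X; simp only [demon, dglAngel, compl_inter, compl_compl]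
  | choice a b iha ihb =>
      refine ⟨?_, ?_, ?_⟩
      · intro X Y h
        have ha := iha.1 X Y h
        have hb := ihb.1 X Y h
        rw [eq_empty_iff_forall_notMem] at ha hb ⊢
        rintro ω ⟨h1, h2⟩
        simp only [angel, demon, mem_union, mem_inter_iff] at h1 h2
        rcases h2 with (⟨hda, hdb⟩ | ⟨hda, haa⟩) | ⟨hdb, hab⟩
        · rcases h1 with haa | hab
          · exact ha ω ⟨haa, hda⟩
          · exact hb ω ⟨hab, hdb⟩
        · exact ha ω ⟨haa, hda⟩
        · exact hb ω ⟨hab, hdb⟩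
      · intro X
        simp only [angel, dglAngel, iha.2.1 X, ihb.2.1 X]
      · intro X
        have hda := iha.2.2 X
        have hdb := ihb.2.2 X
        have haa := iha.2.1 Xᶜ
        have hab := ihb.2.1 Xᶜ
        rw [compl_compl] at haa hab
        simp only [demon, dglAngel, hda, hdb, haa, hab]
        ext ω
        simp only [mem_union, mem_inter_iff, mem_compl_iff]
        tauto
  | seq a b iha ihb =>
      have hb1 : ∀ X : Set (V → ℝ), angel b X Xᶜ = dglAngel b X := ihb.2.1
      have hb1' : ∀ X : Set (V → ℝ), angel b Xᶜ X = dglAngel b Xᶜ := by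
        intro X; have := ihb.2.1 Xᶜ; rwa [compl_compl] at this
      have hb2 : ∀ X : Set (V → ℝ), demon b Xᶜ X = (dglAngel b Xᶜ)ᶜ := ihb.2.2
      have hb2' : ∀ X : Set (V → ℝ), demon b X Xᶜ = (dglAngel b X)ᶜ := by
        intro X; have := ihb.2.2 Xᶜ; rwa [compl_compl] at this
      refine ⟨?_, ?_, ?_⟩
      · intro X Y h
        simp only [angel, demon]
        exact iha.1 _ _ (ihb.1 X Y h)
      · intro X
        simp only [angel, dglAngel, hb1 X, hb2' X]
        exact iha.2.1 (dglAngel b X)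
      · intro X
        simp only [demon, dglAngel, hb1' X, hb2 X]
        have := iha.2.2 (dglAngel b Xᶜ)ᶜ
        rwa [compl_compl] at this
  | dual a iha =>
      refine ⟨?_, ?_, ?_⟩
      · intro X Y h
        simp only [angel, demon]
        rw [inter_comm]
        exact iha.1 Y X (by rw [inter_comm]; exact h)
      · intro X
        simp only [angel, dglAngel]
        exact iha.2.2 X
      · intro X
        simp only [demon, dglAngel, compl_compl]
        exact iha.2.1 X
  | star a iha =>
      have hM : ∀ X Y : Set (V → ℝ), X ∩ Y = ∅ →
          ⋂₀ {Z | (X ∩ Y) ∪ (angel a Z Z ∩ demon a Z Z) ⊆ Z} = (∅ : Set (V → ℝ)) := by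
        intro X Y h
        refine subset_empty_iff.1 (sInter_subset_of_mem ?_)
        simp only [mem_setOf_eq]
        rw [h, iha.1 ∅ ∅ (by simp)]
        simp
      have hU : ∀ X : Set (V → ℝ),
          ⋂₀ {Z | X ∪ angel a Z Zᶜ ⊆ Z} = ⋂₀ {Z | X ∪ dglAngel a Z ⊆ Z} := by
        intro X
        have hfam : {Z : Set (V → ℝ) | X ∪ angel a Z Zᶜ ⊆ Z} =
            {Z : Set (V → ℝ) | X ∪ dglAngel a Z ⊆ Z} := by
          ext Z
          rw [mem_setOf_eq, mem_setOf_eq, iha.2.1 Z]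
        rw [hfam]
      have hD : ∀ X : Set (V → ℝ),
          ⋃₀ {Z | Z ⊆ X ∩ demon a Zᶜ Z} = (⋂₀ {Z | Xᶜ ∪ dglAngel a Z ⊆ Z})ᶜ := by
        intro X
        have hfam : {Z : Set (V → ℝ) | Z ⊆ X ∩ demon a Zᶜ Z} =
            compl '' {Z : Set (V → ℝ) | Xᶜ ∪ dglAngel a Z ⊆ Z} := by
          ext Z
          simp only [mem_setOf_eq, mem_image]
          constructor
          · intro hZ
            refine ⟨Zᶜ, ?_, compl_compl Z⟩
            rw [iha.2.2 Z] at hZ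
            intro ω hω hωZ
            have hz := hZ hωZ
            rcases hω with h1 | h2
            · exact h1 hz.1
            · exact hz.2 h2
          · rintro ⟨W, hW, rfl⟩
            rw [iha.2.2 Wᶜ, compl_compl]
            intro ω hω
            refine ⟨?_, ?_⟩
            · by_contra hx; exact hω (hW (Or.inl hx))
            · intro hA; exact hω (hW (Or.inr hA))
        rw [hfam, ← compl_sInter]
      refine ⟨?_, ?_, ?_⟩
      · intro X Y h
        simp only [angel, demon]
        rw [hM X Y h, union_empty, union_empty, hU X, hD Y]
        have hXY : X ⊆ Yᶜ := by
          intro ω hω hY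
          have : ω ∈ X ∩ Y := ⟨hω, hY⟩
          rw [h] at this; exact this
        have hsub : ⋂₀ {Z | X ∪ dglAngel a Z ⊆ Z} ⊆
            ⋂₀ {Z : Set (V → ℝ) | Yᶜ ∪ dglAngel a Z ⊆ Z} := by
          apply sInter_subset_sInter
          intro Z hZ
          exact (union_subset_union_left _ hXY).trans hZ
        rw [eq_empty_iff_forall_notMem]
        rintro ω ⟨h1, h2⟩
        exact h2 (hsub h1)
      · intro X
        simp only [angel, dglAngel]
        rw [hM X Xᶜ (inter_compl_self X), union_empty, hU X]
      · intro X
        simp only [demon, dglAngel]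
        rw [hM Xᶜ X (compl_inter_self X), union_empty, hD X]

/-- Complementary dGL equivalence for Demon:
`δ_α(Xᶜ, X) = δ_α(X) = (ς_α(Xᶜ))ᶜ`. -/
theorem complementary_dGL_equivalence_demon (α : Game V) (X : Set (V → ℝ)) :
    demon α Xᶜ X = dglDemon α X := by
  exact (semi_zero_sum α).2.2 X
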